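/- arXiv:2502.15748 — 3 statements merged into one kernel-verified Lean document; each statement's English description precedes it below -/
import Mathlib

section
/- For a commutative Krasner hyperring R with unit, the following are equivalent: (i) Spec(R) is a T₁-space; (ii) every prime hyperideal of R is maximal (dim R = 0); (iii) Spec(R) is Hausdorff. -/
universe u

/-- A commutative Krasner hyperring with unit: `(R,+)` is a canonical hypergroup
(multivalued addition), `(R,·)` is a commutative monoid, `·` distributes over `+`
and `0` is absorbing. -/
structure KHR (R : Type u) where
  hadd : R → R → Set R
  mul : R → R → R
  zero : R
  one : R
  neg : R → R
  hadd_comm : ∀ a b, hadd a b = hadd b a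
  hadd_assoc : ∀ a b c, (⋃ x ∈ hadd a b, hadd x c) = ⋃ y ∈ hadd b c, hadd a y
  zero_hadd : ∀ a, hadd zero a = {a}
  neg_mem : ∀ a, zero ∈ hadd a (neg a)
  neg_unique : ∀ a b, zero ∈ hadd a b → b = neg a
  reversible : ∀ a b c, c ∈ hadd a b → b ∈ hadd (neg a) c
  mul_assoc : ∀ a b c, mul (mul a b) c = mul a (mul b c)
  mul_comm : ∀ a b, mul a b = mul b a
  one_mul : ∀ a, mul one a = a
  zero_mul : ∀ a, mul zero a = zero
  distrib : ∀ a b c, (fun x => mul a x) '' hadd b c = hadd (mul a b) (mul a c)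

namespace KHR

variable {R : Type u} {S : Type u} {T : Type u} {Q : Type u}

/-- Sum of two subsets: `A + B = ⋃ {a + b : a ∈ A, b ∈ B}`. -/
def sumSet (H : KHR R) (A B : Set R) : Set R := ⋃ a ∈ A, ⋃ b ∈ B, H.hadd a b

/-- The coset `x + I`. -/
def coset (H : KHR R) (x : R) (I : Set R) : Set R := H.sumSet {x} I

/-- Hyperideal of a Krasner hyperring. -/
def IsHyperideal (H : KHR R) (I : Set R) : Prop :=
  H.zero ∈ I ∧ (∀ a ∈ I, ∀ b ∈ I, H.hadd a b ⊆ I) ∧ (∀ a ∈ I, H.neg a ∈ I) ∧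
    ∀ r : R, ∀ a ∈ I, H.mul r a ∈ I

/-- Prime hyperideal. -/
def IsPrime (H : KHR R) (P : Set R) : Prop :=
  H.IsHyperideal P ∧ P ≠ Set.univ ∧ ∀ a b : R, H.mul a b ∈ P → a ∈ P ∨ b ∈ P

/-- Maximal hyperideal. -/
def IsMaximal (H : KHR R) (M : Set R) : Prop :=
  H.IsHyperideal M ∧ M ≠ Set.univ ∧ ∀ J : Set R, H.IsHyperideal J → M ⊂ J → J = Set.univ

/-- The prime spectrum. -/
def Spectrum (H : KHR R) : Type u := {P : Set R // H.IsPrime P}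

/-- The Zariski-closed set attached to a set of elements. -/
def V (H : KHR R) (s : Set R) : Set H.Spectrum := {P | s ⊆ P.1}

/-- The basic Zariski-open set attached to an element. -/
def W (H : KHR R) (x : R) : Set H.Spectrum := {P | x ∉ P.1}

/-- The hyperideal generated by a set. -/
def genIdeal (H : KHR R) (s : Set R) : Set R := ⋂₀ {I | H.IsHyperideal I ∧ s ⊆ I}

/-- The product `IJ` of two hyperideals. -/
def mulIdeal (H : KHR R) (I J : Set R) : Set R :=
  H.genIdeal {x | ∃ a ∈ I, ∃ b ∈ J, x = H.mul a b}

/-- The Zariski topology on the prime spectrum. -/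
def zariski (H : KHR R) : TopologicalSpace H.Spectrum :=
  TopologicalSpace.generateFrom {U | ∃ I : Set R, H.IsHyperideal I ∧ U = (H.V I)ᶜ}

/-- Powers of an element. -/
def pow (H : KHR R) (x : R) : ℕ → R
  | 0 => H.one
  | n+1 => H.mul x (H.pow x n)

/-- The nilradical. -/
def nil (H : KHR R) : Set R := {x | ∃ n : ℕ, H.pow x (n+1) = H.zero}

/-- The radical of a hyperideal. -/
def radical (H : KHR R) (I : Set R) : Set R := {x | ∃ n : ℕ, H.pow x (n+1) ∈ I}

/-- Units. -/
def IsUnit (H : KHR R) (x : R) : Prop := ∃ y, H.mul x y = H.one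

/-- Good homomorphism of Krasner hyperrings. -/
structure GoodHom (H : KHR R) (K : KHR S) where
  toFun : R → S
  map_hadd : ∀ a b, toFun '' H.hadd a b = K.hadd (toFun a) (toFun b)
  map_mul : ∀ a b, toFun (H.mul a b) = K.mul (toFun a) (toFun b)
  map_zero : toFun H.zero = K.zero
  map_one : toFun H.one = K.one

theorem comap_prime (H : KHR R) (K : KHR S) (f : GoodHom H K) {P : Set S}
    (hP : K.IsPrime P) : H.IsPrime (f.toFun ⁻¹' P) := by
  obtain ⟨⟨h0, haddc, hneg, hmulc⟩, hne, hpr⟩ := hP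
  refine ⟨⟨?_, ?_, ?_, ?_⟩, ?_, ?_⟩
  · show f.toFun H.zero ∈ P
    rw [f.map_zero]; exact h0
  · intro a ha b hb c hc
    have : f.toFun c ∈ K.hadd (f.toFun a) (f.toFun b) := by
      rw [← f.map_hadd]; exact ⟨c, hc, rfl⟩
    exact haddc _ ha _ hb this
  · intro a ha
    have hz : K.zero ∈ K.hadd (f.toFun a) (f.toFun (H.neg a)) := by
      rw [← f.map_hadd, ← f.map_zero]
      exact ⟨H.zero, H.neg_mem a, rfl⟩
    have : f.toFun (H.neg a) = K.neg (f.toFun a) := K.neg_unique _ _ hz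
    show f.toFun (H.neg a) ∈ P
    rw [this]; exact hneg _ ha
  · intro r a ha
    show f.toFun (H.mul r a) ∈ P
    rw [f.map_mul]; exact hmulc _ _ ha
  · intro hU
    apply hne
    ext s
    simp only [Set.mem_univ, iff_true]
    have h1 : f.toFun H.one ∈ P := by
      have : H.one ∈ f.toFun ⁻¹' P := by rw [hU]; trivial
      exact this
    have : K.mul s (f.toFun H.one) ∈ P := hmulc s _ h1
    rwa [f.map_one, K.mul_comm, K.one_mul] at this
  · intro a b hab
    have : K.mul (f.toFun a) (f.toFun b) ∈ P := by rw [← f.map_mul]; exact hab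
    exact hpr _ _ this

/-- The induced map on spectra. -/
def specMap (H : KHR R) (K : KHR S) (f : GoodHom H K) : K.Spectrum → H.Spectrum :=
  fun P => ⟨f.toFun ⁻¹' P.1, comap_prime H K f P.2⟩

/-- `K` is the quotient hyperring of `H` by the hyperideal `I`, witnessed by the
canonical projection. -/
structure IsQuotient (H : KHR R) (K : KHR Q) (I : Set R) where
  hom : GoodHom H K
  surj : Function.Surjective hom.toFun
  fiber : ∀ x y, hom.toFun x = hom.toFun y ↔ H.coset x I = H.coset y I

/-- Strongly regular (equivalence) relation on a Krasner hyperring. -/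
def StronglyRegular (H : KHR R) (ρ : R → R → Prop) : Prop :=
  Equivalence ρ ∧ ∀ a b c d, ρ a b → ρ c d →
    (∀ x ∈ H.hadd a c, ∀ y ∈ H.hadd b d, ρ x y) ∧ ρ (H.mul a c) (H.mul b d)

/-- The fundamental relation `γ*`: the smallest strongly regular relation. -/
def gamma (H : KHR R) : R → R → Prop := fun x y => ∀ ρ, H.StronglyRegular ρ → ρ x y

/-- The zero class `γ*(0)` of the fundamental relation. -/
def gammaZero (H : KHR R) : Set R := {x | H.gamma x H.zero}



/-- The product of two Krasner hyperrings, with componentwise hyperoperations. -/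
def prodKHR (H : KHR R) (K : KHR S) : KHR (R × S) where
  hadd a b := H.hadd a.1 b.1 ×ˢ K.hadd a.2 b.2
  mul a b := (H.mul a.1 b.1, K.mul a.2 b.2)
  zero := (H.zero, K.zero)
  one := (H.one, K.one)
  neg a := (H.neg a.1, K.neg a.2)
  hadd_comm a b := by beta_reduce; rw [H.hadd_comm, K.hadd_comm]
  hadd_assoc a b c := by
    beta_reduce
    have h1 := H.hadd_assoc a.1 b.1 c.1
    have h2 := K.hadd_assoc a.2 b.2 c.2
    ext ⟨p, q⟩
    have e1 : p ∈ (⋃ x ∈ H.hadd a.1 b.1, H.hadd x c.1) ↔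
        p ∈ ⋃ y ∈ H.hadd b.1 c.1, H.hadd a.1 y := by rw [h1]
    have e2 : q ∈ (⋃ x ∈ K.hadd a.2 b.2, K.hadd x c.2) ↔
        q ∈ ⋃ y ∈ K.hadd b.2 c.2, K.hadd a.2 y := by rw [h2]
    simp only [Set.mem_iUnion, Set.mem_prod] at e1 e2 ⊢
    constructor
    · rintro ⟨⟨x1, x2⟩, ⟨⟨hx1, hx2⟩, hp, hq⟩⟩
      obtain ⟨y1, hy1, hp'⟩ := e1.1 ⟨x1, hx1, hp⟩
      obtain ⟨y2, hy2, hq'⟩ := e2.1 ⟨x2, hx2, hq⟩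
      exact ⟨(y1, y2), ⟨hy1, hy2⟩, hp', hq'⟩
    · rintro ⟨⟨y1, y2⟩, ⟨⟨hy1, hy2⟩, hp, hq⟩⟩
      obtain ⟨x1, hx1, hp'⟩ := e1.2 ⟨y1, hy1, hp⟩
      obtain ⟨x2, hx2, hq'⟩ := e2.2 ⟨y2, hy2, hq⟩
      exact ⟨(x1, x2), ⟨hx1, hx2⟩, hp', hq'⟩
  zero_hadd a := by
    beta_reduce
    rw [H.zero_hadd, K.zero_hadd, Set.singleton_prod_singleton]
  neg_mem a := ⟨H.neg_mem a.1, K.neg_mem a.2⟩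
  neg_unique a b h := Prod.ext (H.neg_unique _ _ h.1) (K.neg_unique _ _ h.2)
  reversible a b c h := ⟨H.reversible _ _ _ h.1, K.reversible _ _ _ h.2⟩
  mul_assoc a b c := Prod.ext (H.mul_assoc _ _ _) (K.mul_assoc _ _ _)
  mul_comm a b := Prod.ext (H.mul_comm _ _) (K.mul_comm _ _)
  one_mul a := Prod.ext (H.one_mul _) (K.one_mul _)
  zero_mul a := Prod.ext (H.zero_mul _) (K.zero_mul _)
  distrib a b c := by
    ext ⟨p, q⟩
    simp only [Set.mem_image, Set.mem_prod]
    constructor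
    · rintro ⟨⟨x, y⟩, ⟨hx, hy⟩, h⟩
      obtain ⟨h1, h2⟩ := Prod.mk.injEq .. ▸ h
      constructor
      · rw [← H.distrib]; exact ⟨x, hx, h1⟩
      · rw [← K.distrib]; exact ⟨y, hy, h2⟩
    · rintro ⟨hp, hq⟩
      rw [← H.distrib] at hp
      rw [← K.distrib] at hq
      obtain ⟨x, hx, hx'⟩ := hp
      obtain ⟨y, hy, hy'⟩ := hq
      exact ⟨(x, y), ⟨hx, hy⟩, by simp [hx', hy']⟩


end KHR

namespace KHR

variable {R : Type u} (H : KHR R)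

/-! ### Basic arithmetic lemmas -/

lemma mul_one' (a : R) : H.mul a H.one = a := by rw [H.mul_comm, H.one_mul]

lemma mul_zero' (a : R) : H.mul a H.zero = H.zero := by rw [H.mul_comm, H.zero_mul]

lemma hadd_zero (a : R) : H.hadd a H.zero = {a} := by rw [H.hadd_comm, H.zero_hadd]

lemma mul_neg (a b : R) : H.mul a (H.neg b) = H.neg (H.mul a b) := by
  apply H.neg_unique
  have hmem : H.mul a H.zero ∈ (fun x => H.mul a x) '' H.hadd b (H.neg b) :=
    ⟨H.zero, H.neg_mem b, rfl⟩
  rw [H.distrib] at hmem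
  rwa [H.mul_zero'] at hmem

lemma mul_neg_one (a : R) : H.mul a (H.neg H.one) = H.neg a := by
  rw [H.mul_neg, H.mul_one']

lemma neg_one_mul (a : R) : H.mul (H.neg H.one) a = H.neg a := by
  rw [H.mul_comm, H.mul_neg_one]

lemma neg_mem_hadd {m u x : R} (h : x ∈ H.hadd m u) :
    H.neg x ∈ H.hadd (H.neg m) (H.neg u) := by
  have hmem : H.mul (H.neg H.one) x ∈ (fun y => H.mul (H.neg H.one) y) '' H.hadd m u :=
    ⟨x, h, rfl⟩
  rw [H.distrib] at hmem
  rwa [H.neg_one_mul, H.neg_one_mul, H.neg_one_mul] at hmem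

lemma mul_mul_mul (a b c d : R) :
    H.mul (H.mul a b) (H.mul c d) = H.mul (H.mul a c) (H.mul b d) := by
  rw [H.mul_assoc, H.mul_assoc]
  congr 1
  rw [← H.mul_assoc, ← H.mul_assoc, H.mul_comm b c]

lemma hyperideal_eq_univ {I : Set R} (hI : H.IsHyperideal I) (h1 : H.one ∈ I) :
    I = Set.univ := by
  ext x
  simp only [Set.mem_univ, iff_true]
  have := hI.2.2.2 x H.one h1
  rwa [H.mul_one'] at this

/-! ### Associativity helpers for the hyperaddition -/

lemma assoc_mem₁ {a b c w : R} (hx : ∃ x ∈ H.hadd a b, w ∈ H.hadd x c) :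
    ∃ v ∈ H.hadd b c, w ∈ H.hadd a v := by
  obtain ⟨x, hx, hw⟩ := hx
  have hmem : w ∈ ⋃ x ∈ H.hadd a b, H.hadd x c := Set.mem_biUnion hx hw
  rw [H.hadd_assoc] at hmem
  simpa using hmem

lemma assoc_mem₂ {a b c w : R} (hv : ∃ v ∈ H.hadd b c, w ∈ H.hadd a v) :
    ∃ x ∈ H.hadd a b, w ∈ H.hadd x c := by
  obtain ⟨v, hv, hw⟩ := hv
  have hmem : w ∈ ⋃ v ∈ H.hadd b c, H.hadd a v := Set.mem_biUnion hv hw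
  rw [← H.hadd_assoc] at hmem
  simpa using hmem

lemma hadd_rearrange {a b c d x y z : R} (hx : x ∈ H.hadd a b) (hy : y ∈ H.hadd c d)
    (hz : z ∈ H.hadd x y) : ∃ p ∈ H.hadd a c, ∃ q ∈ H.hadd b d, z ∈ H.hadd p q := by
  obtain ⟨w, hw, hz2⟩ := H.assoc_mem₂ ⟨y, hy, hz⟩
  obtain ⟨v, hv, hw2⟩ := H.assoc_mem₁ ⟨x, hx, hw⟩
  rw [H.hadd_comm] at hv
  obtain ⟨p, hp, hw3⟩ := H.assoc_mem₂ ⟨v, hv, hw2⟩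
  obtain ⟨q, hq, hz3⟩ := H.assoc_mem₁ ⟨w, hw3, hz2⟩
  exact ⟨p, hp, q, hq, hz3⟩

/-! ### The ideal `I + ⟨a⟩` -/

/-- The hyperideal `I + ⟨a⟩`. -/
def extId (I : Set R) (a : R) : Set R :=
  {x | ∃ m ∈ I, ∃ r, x ∈ H.hadd m (H.mul r a)}

lemma subset_extId {I : Set R} {a : R} : I ⊆ H.extId I a := by
  intro m hm
  refine ⟨m, hm, H.zero, ?_⟩
  rw [H.zero_mul, H.hadd_zero]
  exact rfl

lemma mem_extId {I : Set R} {a : R} (h0 : H.zero ∈ I) : a ∈ H.extId I a := by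
  refine ⟨H.zero, h0, H.one, ?_⟩
  rw [H.one_mul, H.zero_hadd]
  exact rfl

lemma extId_hyperideal {I : Set R} (a : R) (hI : H.IsHyperideal I) :
    H.IsHyperideal (H.extId I a) := by
  obtain ⟨h0, haddc, hnegc, hmulc⟩ := hI
  refine ⟨⟨H.zero, h0, H.zero, ?_⟩, ?_, ?_, ?_⟩
  · rw [H.zero_mul, H.zero_hadd]; exact rfl
  · rintro x ⟨m₁, hm₁, r₁, hx⟩ y ⟨m₂, hm₂, r₂, hy⟩ z hz
    obtain ⟨p, hp, q, hq, hz'⟩ := H.hadd_rearrange hx hy hz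
    have hq' : q ∈ H.hadd (H.mul a r₁) (H.mul a r₂) := by
      rwa [H.mul_comm r₁ a, H.mul_comm r₂ a] at hq
    rw [← H.distrib] at hq'
    obtain ⟨s, hs, hqe⟩ := hq'
    refine ⟨p, haddc _ hm₁ _ hm₂ hp, s, ?_⟩
    have hqe' : H.mul a s = q := hqe
    rw [H.mul_comm s a, hqe']
    exact hz'
  · rintro x ⟨m, hm, r, hx⟩
    refine ⟨H.neg m, hnegc _ hm, H.mul (H.neg H.one) r, ?_⟩
    have hmem := H.neg_mem_hadd hx
    rwa [show H.mul (H.mul (H.neg H.one) r) a = H.neg (H.mul r a) by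
      rw [H.mul_assoc, H.neg_one_mul]]
  · rintro r' x ⟨m, hm, r, hx⟩
    refine ⟨H.mul r' m, hmulc r' m hm, H.mul r' r, ?_⟩
    have himg : H.mul r' x ∈ (fun y => H.mul r' y) '' H.hadd m (H.mul r a) := ⟨x, hx, rfl⟩
    rw [H.distrib] at himg
    rwa [← H.mul_assoc] at himg

lemma mul_extId_mem {Q : Set R} (hQ : H.IsHyperideal Q) {a b : R} (hab : H.mul a b ∈ Q)
    {s₁ s₂ : R} (h₁ : s₁ ∈ H.extId Q a) (h₂ : s₂ ∈ H.extId Q b) : H.mul s₁ s₂ ∈ Q := by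
  obtain ⟨q₁, hq₁, r₁, h₁⟩ := h₁
  obtain ⟨q₂, hq₂, r₂, h₂⟩ := h₂
  have himg1 : H.mul (H.mul r₂ b) s₁ ∈
      (fun y => H.mul (H.mul r₂ b) y) '' H.hadd q₁ (H.mul r₁ a) := ⟨s₁, h₁, rfl⟩
  rw [H.distrib] at himg1
  have hv1 : H.mul (H.mul r₂ b) q₁ ∈ Q := hQ.2.2.2 _ _ hq₁
  have hv2 : H.mul (H.mul r₂ b) (H.mul r₁ a) ∈ Q := by
    have e1 : H.mul b (H.mul r₁ a) = H.mul r₁ (H.mul a b) := by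
      rw [← H.mul_assoc, H.mul_comm b r₁, H.mul_assoc, H.mul_comm b a]
    have e : H.mul (H.mul r₂ b) (H.mul r₁ a) = H.mul (H.mul r₂ r₁) (H.mul a b) := by
      rw [H.mul_assoc, e1, ← H.mul_assoc]
    rw [e]
    exact hQ.2.2.2 _ _ hab
  have hv : H.mul (H.mul r₂ b) s₁ ∈ Q := hQ.2.1 _ hv1 _ hv2 himg1
  have himg2 : H.mul s₁ s₂ ∈ (fun y => H.mul s₁ y) '' H.hadd q₂ (H.mul r₂ b) := ⟨s₂, h₂, rfl⟩
  rw [H.distrib] at himg2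
  have hu : H.mul s₁ q₂ ∈ Q := hQ.2.2.2 _ _ hq₂
  have hv' : H.mul s₁ (H.mul r₂ b) ∈ Q := by rw [H.mul_comm]; exact hv
  exact hQ.2.1 _ hu _ hv' himg2

/-! ### Zorn arguments -/

lemma chain_union_hyperideal {c : Set (Set R)} (hc : IsChain (· ⊆ ·) c)
    (hne : c.Nonempty) (h : ∀ I ∈ c, H.IsHyperideal I) : H.IsHyperideal (⋃₀ c) := by
  obtain ⟨I0, hI0⟩ := hne
  refine ⟨⟨I0, hI0, (h I0 hI0).1⟩, ?_, ?_, ?_⟩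
  · rintro x ⟨I, hI, hx⟩ y ⟨J, hJ, hy⟩ z hz
    rcases hc.total hI hJ with hIJ | hJI
    · exact ⟨J, hJ, (h J hJ).2.1 x (hIJ hx) y hy hz⟩
    · exact ⟨I, hI, (h I hI).2.1 x hx y (hJI hy) hz⟩
  · rintro x ⟨I, hI, hx⟩
    exact ⟨I, hI, (h I hI).2.2.1 x hx⟩
  · rintro r x ⟨I, hI, hx⟩
    exact ⟨I, hI, (h I hI).2.2.2 r x hx⟩

lemma exists_maximal {I : Set R} (hI : H.IsHyperideal I) (hne : I ≠ Set.univ) :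
    ∃ M, I ⊆ M ∧ H.IsMaximal M := by
  have h1 : H.one ∉ I := fun h => hne (H.hyperideal_eq_univ hI h)
  obtain ⟨M, hIM, hM⟩ := zorn_subset_nonempty
    {J : Set R | H.IsHyperideal J ∧ H.one ∉ J}
    (fun c hcS hchain hcne =>
      ⟨⋃₀ c, ⟨H.chain_union_hyperideal hchain hcne (fun J hJ => (hcS hJ).1),
        by rintro ⟨J, hJ, h1J⟩; exact (hcS hJ).2 h1J⟩,
        fun s hs => Set.subset_sUnion_of_mem hs⟩) I ⟨hI, h1⟩
  refine ⟨M, hIM, hM.1.1, ?_, ?_⟩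
  · intro h
    exact hM.1.2 (by rw [h]; trivial)
  · intro J hJ hMJ
    by_contra hJuniv
    have h1J : H.one ∉ J := fun h => hJuniv (H.hyperideal_eq_univ hJ h)
    exact hMJ.not_subset (hM.2 ⟨hJ, h1J⟩ hMJ.subset)

lemma maximal_isPrime {M : Set R} (hM : H.IsMaximal M) : H.IsPrime M := by
  obtain ⟨hId, hne, hmax⟩ := hM
  refine ⟨hId, hne, ?_⟩
  intro a b hab
  by_cases ha : a ∈ M
  · exact Or.inl ha
  right
  have hext : H.extId M a = Set.univ := by
    apply hmax _ (H.extId_hyperideal a hId)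
    exact (H.subset_extId).ssubset_of_ne
      (fun h => ha (by rw [h]; exact H.mem_extId hId.1))
  have h1 : H.one ∈ H.extId M a := by rw [hext]; trivial
  obtain ⟨m, hm, r, h1⟩ := h1
  have himg : H.mul b H.one ∈ (fun y => H.mul b y) '' H.hadd m (H.mul r a) := ⟨H.one, h1, rfl⟩
  rw [H.distrib] at himg
  rw [H.mul_one'] at himg
  have h2 : H.mul b (H.mul r a) ∈ M := by
    have e : H.mul b (H.mul r a) = H.mul r (H.mul a b) := by
      rw [← H.mul_assoc, H.mul_comm b r, H.mul_assoc, H.mul_comm b a]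
    rw [e]
    exact hId.2.2.2 r _ hab
  exact hId.2.1 _ (hId.2.2.2 b m hm) _ h2 himg

lemma one_not_mem_prime {P : Set R} (hP : H.IsPrime P) : H.one ∉ P :=
  fun h => hP.2.1 (H.hyperideal_eq_univ hP.1 h)

lemma exists_prime_disjoint {S : Set R} (hmul : ∀ a ∈ S, ∀ b ∈ S, H.mul a b ∈ S)
    (hSne : S.Nonempty) (h0 : H.zero ∉ S) :
    ∃ Q, H.IsPrime Q ∧ ∀ x ∈ Q, x ∉ S := by
  have hz : H.IsHyperideal {H.zero} := by
    refine ⟨rfl, ?_, ?_, ?_⟩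
    · rintro a rfl b rfl
      rw [H.zero_hadd]
    · rintro a rfl
      show H.neg H.zero = H.zero
      have hzz : H.zero ∈ H.hadd H.zero H.zero := by rw [H.zero_hadd]; rfl
      exact (H.neg_unique _ _ hzz).symm
    · rintro r a rfl
      show H.mul r H.zero = H.zero
      exact H.mul_zero' r
  obtain ⟨Q, -, hQ⟩ := zorn_subset_nonempty
    {J : Set R | H.IsHyperideal J ∧ ∀ x ∈ J, x ∉ S}
    (fun c hcS hchain hcne =>
      ⟨⋃₀ c, ⟨H.chain_union_hyperideal hchain hcne (fun J hJ => (hcS hJ).1),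
        by rintro x ⟨J, hJ, hx⟩; exact (hcS hJ).2 x hx⟩,
        fun s hs => Set.subset_sUnion_of_mem hs⟩)
    {H.zero} ⟨hz, by rintro x rfl; exact h0⟩
  refine ⟨Q, ⟨hQ.1.1, ?_, ?_⟩, hQ.1.2⟩
  · intro h
    obtain ⟨s, hs⟩ := hSne
    exact hQ.1.2 s (by rw [h]; trivial) hs
  · intro a b hab
    by_contra hcon
    push_neg at hcon
    obtain ⟨ha, hb⟩ := hcon
    have hA : ¬ (∀ x ∈ H.extId Q a, x ∉ S) := by
      intro hdisj
      exact ha (hQ.2 ⟨H.extId_hyperideal a hQ.1.1, hdisj⟩ H.subset_extId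
        (H.mem_extId hQ.1.1.1))
    have hB : ¬ (∀ x ∈ H.extId Q b, x ∉ S) := by
      intro hdisj
      exact hb (hQ.2 ⟨H.extId_hyperideal b hQ.1.1, hdisj⟩ H.subset_extId
        (H.mem_extId hQ.1.1.1))
    push_neg at hA hB
    obtain ⟨s₁, hs₁ext, hs₁S⟩ := hA
    obtain ⟨s₂, hs₂ext, hs₂S⟩ := hB
    exact hQ.1.2 _ (H.mul_extId_mem hQ.1.1 hab hs₁ext hs₂ext) (hmul _ hs₁S _ hs₂S)

/-! ### Powers -/

lemma pow_one (f : R) : H.pow f 1 = f := by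
  show H.mul f H.one = f
  exact H.mul_one' f

lemma pow_add' (f : R) (m n : ℕ) : H.mul (H.pow f m) (H.pow f n) = H.pow f (m + n) := by
  induction m with
  | zero =>
    show H.mul H.one (H.pow f n) = H.pow f (0 + n)
    rw [H.one_mul, Nat.zero_add]
  | succ m ih =>
    show H.mul (H.mul f (H.pow f m)) (H.pow f n) = H.pow f (m + 1 + n)
    rw [H.mul_assoc, ih, Nat.add_right_comm]
    rfl

lemma pow_not_mem {P : Set R} (hP : H.IsPrime P) {f : R} (hf : f ∉ P) (n : ℕ) :
    H.pow f (n + 1) ∉ P := by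
  induction n with
  | zero => rwa [H.pow_one]
  | succ n ih =>
    intro h
    have h2 : H.mul f (H.pow f (n + 1)) ∈ P := h
    rcases hP.2.2 f (H.pow f (n + 1)) h2 with h' | h'
    · exact hf h'
    · exact ih h'

/-! ### Topology lemmas -/

lemma genIdeal_hyperideal (s : Set R) : H.IsHyperideal (H.genIdeal s) := by
  refine ⟨Set.mem_sInter.2 fun I hI => hI.1.1, ?_, ?_, ?_⟩
  · intro a ha b hb c hc
    exact Set.mem_sInter.2 fun I hI =>
      hI.1.2.1 a (Set.mem_sInter.1 ha I hI) b (Set.mem_sInter.1 hb I hI) hc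
  · intro a ha
    exact Set.mem_sInter.2 fun I hI => hI.1.2.2.1 a (Set.mem_sInter.1 ha I hI)
  · intro r a ha
    exact Set.mem_sInter.2 fun I hI => hI.1.2.2.2 r a (Set.mem_sInter.1 ha I hI)

lemma subset_genIdeal {s : Set R} : s ⊆ H.genIdeal s :=
  fun _x hx => Set.mem_sInter.2 fun _I hI => hI.2 hx

lemma genIdeal_le {s I : Set R} (hI : H.IsHyperideal I) (hs : s ⊆ I) :
    H.genIdeal s ⊆ I :=
  Set.sInter_subset_of_mem ⟨hI, hs⟩

lemma W_open (x : R) : H.zariski.IsOpen (H.W x) := by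
  have hW : H.W x = (H.V (H.genIdeal {x}))ᶜ := by
    ext P
    simp only [W, V, Set.mem_setOf_eq, Set.mem_compl_iff]
    constructor
    · exact fun hx h => hx (h (H.subset_genIdeal (Set.mem_singleton x)))
    · intro h hx
      exact h (H.genIdeal_le P.2.1 (Set.singleton_subset_iff.2 hx))
  rw [hW]
  exact TopologicalSpace.GenerateOpen.basic _ ⟨H.genIdeal {x}, H.genIdeal_hyperideal {x}, rfl⟩

lemma open_down {U : Set H.Spectrum}
    (hU : TopologicalSpace.GenerateOpen
      {U | ∃ I : Set R, H.IsHyperideal I ∧ U = (H.V I)ᶜ} U)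
    {P Q : H.Spectrum} (hQP : Q.1 ⊆ P.1) : P ∈ U → Q ∈ U := by
  induction hU with
  | basic V hV =>
    obtain ⟨I, hI, rfl⟩ := hV
    intro hP hQI
    exact hP fun x hx => hQP (hQI hx)
  | univ => exact fun _ => trivial
  | inter U V hU hV ihU ihV => exact fun hP => ⟨ihU hP.1, ihV hP.2⟩
  | sUnion S hS ih =>
    rintro ⟨t, ht, hPt⟩
    exact ⟨t, ht, ih t ht hPt⟩

end KHR

/-- The following are equivalent: `Spec R` is `T₁`; every prime
hyperideal of `R` is maximal (`dim R = 0`); `Spec R` is Hausdorff. -/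
theorem stmt16 {R : Type u} (H : KHR R) :
    (@T1Space H.Spectrum H.zariski ↔ ∀ P : Set R, H.IsPrime P → H.IsMaximal P) ∧
    ((∀ P : Set R, H.IsPrime P → H.IsMaximal P) ↔ @T2Space H.Spectrum H.zariski) := by
  have hT1dim : @T1Space H.Spectrum H.zariski → ∀ P : Set R, H.IsPrime P → H.IsMaximal P := by
    intro hT1 P hP
    obtain ⟨M, hPM, hM⟩ := H.exists_maximal hP.1 hP.2.1
    have hMP : M = P := by
      by_contra hne
      have hmP : (⟨M, H.maximal_isPrime hM⟩ : H.Spectrum) ≠ ⟨P, hP⟩ := by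
        intro h
        exact hne (congrArg Subtype.val h)
      have hopen : H.zariski.IsOpen ({(⟨P, hP⟩ : H.Spectrum)}ᶜ) :=
        (@isClosed_singleton _ H.zariski hT1 ⟨P, hP⟩).isOpen_compl
      exact H.open_down hopen (P := ⟨M, H.maximal_isPrime hM⟩) (Q := ⟨P, hP⟩) hPM hmP rfl
    exact hMP ▸ hM
  have hdimT2 : (∀ P : Set R, H.IsPrime P → H.IsMaximal P) → @T2Space H.Spectrum H.zariski := by
    intro hdim
    letI := H.zariski
    refine ⟨fun x y hxy => ?_⟩
    obtain ⟨P, hP⟩ := x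
    obtain ⟨Q, hQ⟩ := y
    have hPQset : P ≠ Q := fun h => hxy (Subtype.ext h)
    have hnsub : ¬ P ⊆ Q := fun h =>
      hQ.2.1 ((hdim P hP).2.2 Q hQ.1 (h.ssubset_of_ne hPQset))
    obtain ⟨f, hfP, hfQ⟩ := Set.not_subset.1 hnsub
    have key : ∃ s, s ∉ P ∧ ∃ n, H.mul s (H.pow f (n + 1)) = H.zero := by
      by_contra hcon
      push_neg at hcon
      set S : Set R := {x | ∃ s, s ∉ P ∧ ∃ n, x = H.mul s (H.pow f (n + 1))} with hSdef
      have h0S : H.zero ∉ S := by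
        rintro ⟨s, hs, n, h⟩
        exact hcon s hs n h.symm
      have hSne : S.Nonempty :=
        ⟨f, H.one, H.one_not_mem_prime hP, 0,
          by rw [show (0 : ℕ) + 1 = 1 from rfl, H.pow_one, H.one_mul]⟩
      have hmulS : ∀ a ∈ S, ∀ b ∈ S, H.mul a b ∈ S := by
        rintro _ ⟨s, hs, m, rfl⟩ _ ⟨t, ht, n, rfl⟩
        refine ⟨H.mul s t, fun h => ?_, m + n + 1, ?_⟩
        · rcases hP.2.2 s t h with h' | h'
          exacts [hs h', ht h']
        · rw [H.mul_mul_mul, H.pow_add',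
            show m + 1 + (n + 1) = m + n + 1 + 1 by omega]
      obtain ⟨Q', hQ', hdisj⟩ := H.exists_prime_disjoint hmulS hSne h0S
      have hsub : Q' ⊆ P := by
        intro t ht
        by_contra htP
        exact hdisj _ (hQ'.1.2.2.2 (H.pow f 1) t ht)
          ⟨t, htP, 0, by rw [H.mul_comm, show (0 : ℕ) + 1 = 1 from rfl]⟩
      have hfQ' : f ∉ Q' := fun h =>
        hdisj f h ⟨H.one, H.one_not_mem_prime hP, 0,
          by rw [show (0 : ℕ) + 1 = 1 from rfl, H.pow_one, H.one_mul]⟩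
      have hPuniv : P = Set.univ :=
        (hdim Q' hQ').2.2 P hP.1
          (hsub.ssubset_of_ne (fun h => hfQ' (by rw [h]; exact hfP)))
      exact hP.2.1 hPuniv
    obtain ⟨s, hsP, n, hsfn⟩ := key
    refine ⟨H.W s, H.W f, H.W_open s, H.W_open f, hsP, hfQ, ?_⟩
    rw [Set.disjoint_left]
    rintro ⟨T, hT⟩ hTs hTf
    have hTs' : s ∉ T := hTs
    have hTf' : f ∉ T := hTf
    have hpow : H.pow f (n + 1) ∉ T := H.pow_not_mem hT hTf' n
    have h0T : H.zero ∈ T := hT.1.1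
    rw [← hsfn] at h0T
    rcases hT.2.2 s _ h0T with h | h
    exacts [hTs' h, hpow h]
  exact ⟨⟨hT1dim, fun hdim => @T2Space.t1Space _ H.zariski (hdimT2 hdim)⟩,
    hdimT2, fun hT2 => hT1dim (@T2Space.t1Space _ H.zariski hT2)⟩
end

section
/- Let R be a (Krasner) hyperring. The map ρ ↦ ρ(0) = {x ∈ R : ρ(x) = 0_{R/ρ}} is an isomorphism of complete lattices between the lattice SR(R) of strongly regular relations on R and the lattice I(γ*(0)) of hyperideals of R containing γ*(0), with inverse I ↦ ρ_I = {(x,y) : x + I = y + I}; moreover for ρ ∈ SR(R), ρ(x) = x + ρ(0) for all x ∈ R, and R/ρ ≅ R/ρ(0) as rings. -/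
universe u

namespace KHR

variable {R : Type u} {S : Type u} {T : Type u} {Q : Type u}

section Aux18

variable {R : Type u}

lemma haddZero (H : KHR R) (a : R) : H.hadd a H.zero = {a} := by
  rw [H.hadd_comm]; exact H.zero_hadd a

lemma haddNonempty (H : KHR R) (a b : R) : (H.hadd a b).Nonempty := by
  have h := H.hadd_assoc a b (H.neg b)
  have ha : a ∈ ⋃ y ∈ H.hadd b (H.neg b), H.hadd a y := by
    refine Set.mem_iUnion₂.2 ⟨H.zero, H.neg_mem b, ?_⟩
    rw [haddZero]; rfl
  rw [← h] at ha
  obtain ⟨x, hx, -⟩ := Set.mem_iUnion₂.1 ha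
  exact ⟨x, hx⟩

lemma negNeg (H : KHR R) (a : R) : H.neg (H.neg a) = a :=
  (H.neg_unique (H.neg a) a (by rw [H.hadd_comm]; exact H.neg_mem a)).symm

lemma memCoset (H : KHR R) {x z : R} {I : Set R} :
    z ∈ H.coset x I ↔ ∃ i ∈ I, z ∈ H.hadd x i := by
  simp [KHR.coset, KHR.sumSet]

lemma memCosetSelf (H : KHR R) {x : R} {I : Set R} (h0 : H.zero ∈ I) :
    x ∈ H.coset x I :=
  (memCoset H).2 ⟨H.zero, h0, by rw [haddZero]; rfl⟩

lemma cosetSubset (H : KHR R) {x y : R} {I : Set R} (hI : H.IsHyperideal I)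
    (hy : y ∈ H.coset x I) : H.coset y I ⊆ H.coset x I := by
  obtain ⟨i, hi, hyi⟩ := (memCoset H).1 hy
  intro z hz
  obtain ⟨j, hj, hzj⟩ := (memCoset H).1 hz
  have hzmem : z ∈ ⋃ w ∈ H.hadd x i, H.hadd w j := Set.mem_iUnion₂.2 ⟨y, hyi, hzj⟩
  rw [H.hadd_assoc] at hzmem
  obtain ⟨u, hu, hzu⟩ := Set.mem_iUnion₂.1 hzmem
  exact (memCoset H).2 ⟨u, hI.2.1 i hi j hj hu, hzu⟩

lemma cosetEqIff (H : KHR R) {x y : R} {I : Set R} (hI : H.IsHyperideal I) :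
    H.coset x I = H.coset y I ↔ y ∈ H.coset x I := by
  constructor
  · intro h; rw [h]; exact memCosetSelf H hI.1
  · intro hy
    obtain ⟨i, hi, hyi⟩ := (memCoset H).1 hy
    have hx : x ∈ H.coset y I := by
      have h1 : y ∈ H.hadd i x := by rw [H.hadd_comm]; exact hyi
      have h2 := H.reversible i x y h1
      refine (memCoset H).2 ⟨H.neg i, hI.2.2.1 i hi, ?_⟩
      rwa [H.hadd_comm] at h2
    exact Set.Subset.antisymm (cosetSubset H hI hx) (cosetSubset H hI hy)

lemma srClass (H : KHR R) {ρ : R → R → Prop} (h : H.StronglyRegular ρ) (x y : R) :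
    ρ x y ↔ y ∈ H.coset x {z | ρ z H.zero} := by
  constructor
  · intro hxy
    obtain ⟨t, ht⟩ := haddNonempty H y (H.neg x)
    have hr := (h.2 x y (H.neg x) (H.neg x) hxy (h.1.refl _)).1
    have h0t : ρ H.zero t := hr H.zero (H.neg_mem x) t ht
    refine (memCoset H).2 ⟨t, h.1.symm h0t, ?_⟩
    have h1 : t ∈ H.hadd (H.neg x) y := by rwa [H.hadd_comm] at ht
    have h2 := H.reversible (H.neg x) y t h1
    rwa [negNeg] at h2
  · intro hy
    obtain ⟨i, hi, hyi⟩ := (memCoset H).1 hy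
    have hr := (h.2 x x i H.zero (h.1.refl _) hi).1
    have hyx : ρ y x := hr y hyi x (by rw [haddZero]; rfl)
    exact h.1.symm hyx

lemma srCosetEq (H : KHR R) {ρ : R → R → Prop} (h : H.StronglyRegular ρ) (x y : R) :
    ρ x y ↔ H.coset x {z | ρ z H.zero} = H.coset y {z | ρ z H.zero} := by
  constructor
  · intro hxy
    ext z
    rw [← srClass H h x z, ← srClass H h y z]
    exact ⟨fun hz => h.1.trans (h.1.symm hxy) hz, fun hz => h.1.trans hxy hz⟩
  · intro heq
    have hy : y ∈ H.coset x {z | ρ z H.zero} := by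
      rw [heq]
      exact memCosetSelf H (h.1.refl _)
    exact (srClass H h x y).2 hy

lemma srIdeal (H : KHR R) {ρ : R → R → Prop} (h : H.StronglyRegular ρ) :
    H.IsHyperideal {z | ρ z H.zero} := by
  refine ⟨h.1.refl _, ?_, ?_, ?_⟩
  · intro a ha b hb c hc
    have hr := (h.2 a H.zero b H.zero ha hb).1
    exact hr c hc H.zero (by rw [H.zero_hadd]; rfl)
  · intro a ha
    have hr := (h.2 a H.zero (H.neg a) (H.neg a) ha (h.1.refl _)).1
    exact h.1.symm (hr H.zero (H.neg_mem a) (H.neg a) (by rw [H.zero_hadd]; rfl))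
  · intro r a ha
    have hm := (h.2 r r a H.zero (h.1.refl _) ha).2
    show ρ (H.mul r a) H.zero
    have hz : H.mul r H.zero = H.zero := by rw [H.mul_comm]; exact H.zero_mul r
    rwa [hz] at hm

lemma gammaSR (H : KHR R) : H.StronglyRegular H.gamma := by
  refine ⟨⟨fun x ρ h => h.1.refl x, fun hxy ρ h => h.1.symm (hxy ρ h),
    fun hxy hyz ρ h => h.1.trans (hxy ρ h) (hyz ρ h)⟩, ?_⟩
  intro a b c d hab hcd
  constructor
  · intro x hx y hy ρ h
    exact (h.2 a b c d (hab ρ h) (hcd ρ h)).1 x hx y hy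
  · intro ρ h
    exact (h.2 a b c d (hab ρ h) (hcd ρ h)).2

lemma cosetSR (H : KHR R) {I : Set R} (hI : H.IsHyperideal I) (hg : H.gammaZero ⊆ I) :
    H.StronglyRegular (fun x y => H.coset x I = H.coset y I) := by
  refine ⟨⟨fun _ => rfl, fun h => h.symm, fun h h' => h.trans h'⟩, ?_⟩
  intro a b c d hab hcd
  have hbmem : b ∈ H.coset a I := (cosetEqIff H hI).1 hab
  have hdmem : d ∈ H.coset c I := (cosetEqIff H hI).1 hcd
  obtain ⟨i, hi, hbi⟩ := (memCoset H).1 hbmem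
  obtain ⟨j, hj, hdj⟩ := (memCoset H).1 hdmem
  constructor
  · intro u hu v hv
    have h1 : v ∈ ⋃ s ∈ H.hadd i d, H.hadd a s := by
      rw [← H.hadd_assoc]
      exact Set.mem_iUnion₂.2 ⟨b, hbi, hv⟩
    obtain ⟨s, hs, hvs⟩ := Set.mem_iUnion₂.1 h1
    have h2 : s ∈ ⋃ t ∈ H.hadd j i, H.hadd c t := by
      rw [← H.hadd_assoc]
      refine Set.mem_iUnion₂.2 ⟨d, hdj, ?_⟩
      rwa [H.hadd_comm i d] at hs
    obtain ⟨t, ht, hst⟩ := Set.mem_iUnion₂.1 h2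
    have htI : t ∈ I := hI.2.1 j hj i hi ht
    have h3 : v ∈ ⋃ p ∈ H.hadd a c, H.hadd p t := by
      rw [H.hadd_assoc]
      exact Set.mem_iUnion₂.2 ⟨s, hst, hvs⟩
    obtain ⟨p, hp, hvp⟩ := Set.mem_iUnion₂.1 h3
    have hup : H.gamma u p :=
      ((gammaSR H).2 a a c c ((gammaSR H).1.refl a) ((gammaSR H).1.refl c)).1 u hu p hp
    have hpI : p ∈ H.coset u I := by
      have hup' := (srClass H (gammaSR H) u p).1 hup
      obtain ⟨z, hz, hpz⟩ := (memCoset H).1 hup'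
      exact (memCoset H).2 ⟨z, hg hz, hpz⟩
    have hvI : v ∈ H.coset u I :=
      cosetSubset H hI hpI ((memCoset H).2 ⟨t, htI, hvp⟩)
    exact (cosetEqIff H hI).2 hvI
  · have h1 : H.mul b d ∈ H.hadd (H.mul d a) (H.mul d i) := by
      rw [← H.distrib]
      exact ⟨b, hbi, H.mul_comm d b⟩
    have h2 : H.mul a d ∈ H.hadd (H.mul a c) (H.mul a j) := by
      rw [← H.distrib]
      exact ⟨d, hdj, rfl⟩
    have hmem1 : H.mul b d ∈ H.coset (H.mul a d) I := by
      refine (memCoset H).2 ⟨H.mul d i, hI.2.2.2 d i hi, ?_⟩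
      rwa [H.mul_comm d a] at h1
    have hmem2 : H.mul a d ∈ H.coset (H.mul a c) I :=
      (memCoset H).2 ⟨H.mul a j, hI.2.2.2 a j hj, h2⟩
    exact (cosetEqIff H hI).2 (cosetSubset H hI hmem2 hmem1)

lemma cosetZero (H : KHR R) {I : Set R} : H.coset H.zero I = I := by
  ext z
  rw [memCoset]
  constructor
  · rintro ⟨i, hi, hz⟩
    rw [H.zero_hadd, Set.mem_singleton_iff] at hz
    rwa [hz]
  · intro hz
    exact ⟨z, hz, by rw [H.zero_hadd]; rfl⟩

end Aux18

end KHR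

/-- The map `ρ ↦ ρ(0)` is an isomorphism of (complete) lattices between
the strongly regular relations on `R` and the hyperideals of `R` containing `γ*(0)`,
with inverse `I ↦ ρ_I` (`x ρ_I y ↔ x + I = y + I`); moreover `ρ(x) = x + ρ(0)` for
all `x`, and `R/ρ ≅ R/ρ(0)` (the relation `ρ` is the coset-equality relation modulo
`ρ(0)`). -/
theorem stmt18 {R : Type u} (H : KHR R) :
    ∃ e : {ρ : R → R → Prop // H.StronglyRegular ρ} ≃
          {I : Set R // H.IsHyperideal I ∧ H.gammaZero ⊆ I},
      (∀ ρ, (e ρ).1 = {x : R | ρ.1 x H.zero}) ∧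
      (∀ I, ∀ x y : R, (e.symm I).1 x y ↔ H.coset x I.1 = H.coset y I.1) ∧
      (∀ ρ σ, ((∀ x y : R, ρ.1 x y → σ.1 x y) ↔ (e ρ).1 ⊆ (e σ).1)) ∧
      (∀ ρ : {ρ : R → R → Prop // H.StronglyRegular ρ}, ∀ x : R,
        {y : R | ρ.1 x y} = H.coset x {z : R | ρ.1 z H.zero}) ∧
      (∀ ρ : {ρ : R → R → Prop // H.StronglyRegular ρ}, ∀ x y : R,
        ρ.1 x y ↔ H.coset x {z : R | ρ.1 z H.zero} = H.coset y {z : R | ρ.1 z H.zero}) := by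
  refine ⟨⟨fun ρ => ⟨{x | ρ.1 x H.zero}, KHR.srIdeal H ρ.2, fun x hx => hx ρ.1 ρ.2⟩,
    fun I => ⟨fun x y => H.coset x I.1 = H.coset y I.1, KHR.cosetSR H I.2.1 I.2.2⟩,
    ?_, ?_⟩, ?_, ?_, ?_, ?_, ?_⟩
  · intro ρ
    apply Subtype.ext
    funext x y
    exact propext ((KHR.srCosetEq H ρ.2 x y).symm)
  · intro I
    apply Subtype.ext
    ext x
    show H.coset x I.1 = H.coset H.zero I.1 ↔ x ∈ I.1
    constructor
    · intro h
      have hx := KHR.memCosetSelf H I.2.1.1 (x := x)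
      rw [h, KHR.cosetZero H] at hx
      exact hx
    · intro hx
      have hx' : x ∈ H.coset H.zero I.1 := by rw [KHR.cosetZero H]; exact hx
      exact ((KHR.cosetEqIff H I.2.1).2 hx').symm
  · intro ρ
    rfl
  · intro I x y
    exact Iff.rfl
  · intro ρ σ
    constructor
    · intro h x hx
      exact h x H.zero hx
    · intro h x y hxy
      have hy := (KHR.srClass H ρ.2 x y).1 hxy
      obtain ⟨i, hi, hyi⟩ := (KHR.memCoset H).1 hy
      have hy' : y ∈ H.coset x {z | σ.1 z H.zero} :=
        (KHR.memCoset H).2 ⟨i, h hi, hyi⟩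
      exact (KHR.srClass H σ.2 x y).2 hy'
  · intro ρ x
    ext y
    exact KHR.srClass H ρ.2 x y
  · intro ρ x y
    exact KHR.srCosetEq H ρ.2 x y
end

section
/- A hyperideal I of a commutative Krasner hyperring R with unit is normal (i.e. x + I − x ⊆ I for all x ∈ R) if and only if γ*(0) ⊆ I, where γ*(0) is the zero class of the fundamental relation γ*. -/
universe u

/-- Auxiliary: the coset relation `a ρ b ↔ a ∈ b + I`. -/
def cosetRel {R : Type u} (H : KHR R) (I : Set R) : R → R → Prop :=
  fun a b => ∃ i ∈ I, a ∈ H.hadd b i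

theorem assoc_mem {R : Type u} (H : KHR R) {a b c p x : R}
    (hp : p ∈ H.hadd a b) (hx : x ∈ H.hadd p c) :
    ∃ y ∈ H.hadd b c, x ∈ H.hadd a y := by
  have h := H.hadd_assoc a b c
  have hx' : x ∈ ⋃ y ∈ H.hadd b c, H.hadd a y := by
    rw [← h]; exact Set.mem_biUnion hp hx
  simpa using hx'

theorem assoc_mem' {R : Type u} (H : KHR R) {a b c w x : R}
    (hw : w ∈ H.hadd b c) (hx : x ∈ H.hadd a w) :
    ∃ p ∈ H.hadd a b, x ∈ H.hadd p c := by
  have h := H.hadd_assoc a b c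
  have hx' : x ∈ ⋃ p ∈ H.hadd a b, H.hadd p c := by
    rw [h]; exact Set.mem_biUnion hw hx
  simpa using hx'

theorem self_mem_hadd_zero {R : Type u} (H : KHR R) (a : R) :
    a ∈ H.hadd a H.zero := by
  rw [H.hadd_comm, H.zero_hadd]; rfl

theorem neg_mem_gammaZero {R : Type u} (H : KHR R) {x y : R}
    (hy : y ∈ H.hadd x (H.neg x)) : y ∈ H.gammaZero := by
  intro ρ hρ
  obtain ⟨heq, hcond⟩ := hρ
  have h := (hcond x x (H.neg x) (H.neg x) (heq.refl x) (heq.refl (H.neg x))).1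
  exact h y hy H.zero (H.neg_mem x)

/-- A hyperideal `I` of a commutative Krasner hyperring with unit is
normal (`x + I - x ⊆ I` for all `x`) iff `γ*(0) ⊆ I`. -/
theorem stmt19 {R : Type u} (H : KHR R) (I : Set R) (hI : H.IsHyperideal I) :
    (∀ x : R, H.sumSet (H.coset x I) {H.neg x} ⊆ I) ↔ H.gammaZero ⊆ I := by
  obtain ⟨h0, hcl, hneg, hmul⟩ := hI
  have hrefl : ∀ a, cosetRel H I a a := fun a => ⟨H.zero, h0, self_mem_hadd_zero H a⟩
  have htrans : ∀ a b c, cosetRel H I a b → cosetRel H I b c → cosetRel H I a c := by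
    rintro a b c ⟨i, hi, hai⟩ ⟨j, hj, hbj⟩
    obtain ⟨y, hy, hay⟩ := assoc_mem H hbj hai
    exact ⟨y, hcl j hj i hi hy, hay⟩
  have hsymm : ∀ a b, cosetRel H I a b → cosetRel H I b a := by
    rintro a b ⟨i, hi, hai⟩
    refine ⟨H.neg i, hneg i hi, ?_⟩
    have h1 : a ∈ H.hadd i b := by rwa [H.hadd_comm]
    have h2 := H.reversible i b a h1
    rwa [H.hadd_comm]
  constructor
  · -- normal → γ*(0) ⊆ I
    intro hnorm
    have hN : ∀ x : R, H.hadd x (H.neg x) ⊆ I := by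
      intro x u hu
      apply hnorm x
      have hx : x ∈ H.coset x I := by
        simp only [KHR.coset, KHR.sumSet, Set.mem_iUnion, Set.mem_singleton_iff]
        exact ⟨x, rfl, H.zero, h0, self_mem_hadd_zero H x⟩
      simp only [KHR.sumSet, Set.mem_iUnion]
      exact ⟨x, hx, H.neg x, rfl, hu⟩
    -- the coset relation is strongly regular
    have hSR : H.StronglyRegular (cosetRel H I) := by
      refine ⟨⟨hrefl, fun h => hsymm _ _ h, fun h h' => htrans _ _ _ h h'⟩, ?_⟩
      rintro a b c d ⟨i, hi, hai⟩ ⟨j, hj, hcj⟩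
      constructor
      · intro x hx y hy
        -- x ∈ a + c ⊆ (b+d) + I
        obtain ⟨w, hw, hxw⟩ := assoc_mem H hai hx
        have hw' : w ∈ H.hadd c i := by rwa [H.hadd_comm] at hw
        obtain ⟨v, hv, hwv⟩ := assoc_mem H hcj hw'
        have hvI : v ∈ I := hcl j hj i hi hv
        obtain ⟨z, hz, hxz⟩ := assoc_mem' H hwv hxw
        -- ρ x z
        have h1 : cosetRel H I x z := ⟨v, hvI, hxz⟩
        -- ρ z y : both z, y ∈ b + d
        have hy' : y ∈ H.hadd d b := by rwa [H.hadd_comm] at hy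
        have hb : b ∈ H.hadd y (H.neg d) := by
          have := H.reversible d b y hy'
          rwa [H.hadd_comm] at this
        obtain ⟨u, hu, hzu⟩ := assoc_mem H hb hz
        have huI : u ∈ I := hN d (by rwa [H.hadd_comm] at hu)
        exact htrans x z y h1 ⟨u, huI, hzu⟩
      · -- multiplicative part
        have h1 : cosetRel H I (H.mul a c) (H.mul b c) := by
          refine ⟨H.mul c i, hmul c i hi, ?_⟩
          have : H.mul a c ∈ (fun t => H.mul c t) '' H.hadd b i :=
            ⟨a, hai, H.mul_comm a c ▸ rfl⟩
          rw [H.distrib] at this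
          rwa [H.mul_comm c b] at this
        have h2 : cosetRel H I (H.mul b c) (H.mul b d) := by
          refine ⟨H.mul b j, hmul b j hj, ?_⟩
          have : H.mul b c ∈ (fun t => H.mul b t) '' H.hadd d j := ⟨c, hcj, rfl⟩
          rw [H.distrib] at this
          exact this
        exact htrans _ _ _ h1 h2
    intro z hz
    obtain ⟨i, hi, hzi⟩ := hz (cosetRel H I) hSR
    rw [H.zero_hadd] at hzi
    rwa [hzi]
  · -- γ*(0) ⊆ I → normal
    intro hsub x t ht
    simp only [KHR.sumSet, KHR.coset, Set.mem_iUnion, Set.mem_singleton_iff] at ht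
    obtain ⟨a, ⟨a', ha', i, hi, hai⟩, b, hb, htb⟩ := ht
    subst ha'; subst hb
    have hai' : a ∈ H.hadd i a' := by rwa [H.hadd_comm] at hai
    obtain ⟨y, hy, hty⟩ := assoc_mem H hai' htb
    have hyI : y ∈ I := hsub (neg_mem_gammaZero H hy)
    exact hcl i hi y hyI hty
end
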